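/- The kernel p̃ is self-similar: for all t > 0 and x, y ∈ ℝ^d, p̃(t,x,y) = t^{-d/α} p̃(1, x t^{-1/α}, y t^{-1/α}). -/

import Mathlib

open MeasureTheory Real Set
open scoped ENNReal

noncomputable def fhk (d : ℕ) (α : ℝ) (t : ℝ) (x : EuclideanSpace ℝ (Fin d)) : ℝ :=
  ((2 * Real.pi) ^ d)⁻¹ *
    (∫ ξ : EuclideanSpace ℝ (Fin d),
      Complex.exp (-(t : ℂ) * ((‖ξ‖ ^ α : ℝ) : ℂ)) *
        Complex.exp (-Complex.I * ((inner ℝ x ξ : ℝ) : ℂ))).re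

noncomputable def pK (d : ℕ) (α : ℝ) (t : ℝ) (x y : EuclideanSpace ℝ (Fin d)) : ℝ :=
  fhk d α t (y - x)

noncomputable def kappaC (d : ℕ) (α β : ℝ) : ℝ :=
  if β = 0 then 0 else
    (2 : ℝ) ^ α * Real.Gamma ((β + α) / 2) * Real.Gamma (((d : ℝ) - β) / 2) /
      (Real.Gamma (β / 2) * Real.Gamma (((d : ℝ) - β - α) / 2))

noncomputable def pn (d : ℕ) (α κ : ℝ) :
    ℕ → ℝ → EuclideanSpace ℝ (Fin d) → EuclideanSpace ℝ (Fin d) → ℝ≥0∞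
  | 0 => fun t x y => ENNReal.ofReal (pK d α t x y)
  | n + 1 => fun t x y =>
      ∫⁻ s in Set.Ioc (0 : ℝ) t, ∫⁻ z,
        ENNReal.ofReal (pK d α s x z) * ENNReal.ofReal (κ * ‖z‖ ^ (-α)) *
          pn d α κ n (t - s) z y

noncomputable def tp (d : ℕ) (α κ : ℝ) (t : ℝ)
    (x y : EuclideanSpace ℝ (Fin d)) : ℝ≥0∞ :=
  ∑' n, pn d α κ n t x y

lemma lintegral_comp_smul' {E : Type*} [NormedAddCommGroup E] [NormedSpace ℝ E]
    [MeasurableSpace E] [BorelSpace E] [FiniteDimensional ℝ E]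
    (μ : Measure E) [μ.IsAddHaarMeasure] (f : E → ℝ≥0∞) {R : ℝ} (hR : 0 < R) :
    ∫⁻ x, f (R • x) ∂μ = ENNReal.ofReal ((R ^ Module.finrank ℝ E)⁻¹) * ∫⁻ x, f x ∂μ := by
  calc ∫⁻ x, f (R • x) ∂μ
      = ∫⁻ y, f y ∂(Measure.map (fun x => R • x) μ) := by
        rw [show (fun x => R • x) = ⇑(Homeomorph.smul (isUnit_iff_ne_zero.2 hR.ne').unit).toMeasurableEquiv from by
          ext x; simp [Units.smul_def]]
        rw [MeasureTheory.lintegral_map_equiv f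
          (Homeomorph.smul (isUnit_iff_ne_zero.2 hR.ne').unit).toMeasurableEquiv]
        simp [Units.smul_def]
    _ = _ := by
        rw [MeasureTheory.Measure.map_addHaar_smul μ hR.ne', lintegral_smul_measure,
          abs_of_nonneg (inv_nonneg.2 (pow_nonneg hR.le _)), smul_eq_mul]

lemma lintegral_eq_comp_smul {d : ℕ} (f : EuclideanSpace ℝ (Fin d) → ℝ≥0∞) {R : ℝ}
    (hR : 0 < R) :
    ∫⁻ x, f x = ENNReal.ofReal (R ^ d) * ∫⁻ x, f (R • x) := by
  rw [lintegral_comp_smul' volume f hR, finrank_euclideanSpace_fin, ← mul_assoc,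
    ← ENNReal.ofReal_mul (pow_nonneg hR.le _), mul_inv_cancel₀ (pow_ne_zero _ hR.ne'),
    ENNReal.ofReal_one, one_mul]

lemma lintegral_Ioc_scale {t b : ℝ} (ht : 0 < t) (h : ℝ → ℝ≥0∞) :
    ∫⁻ x in Set.Ioc 0 (t * b), h x = ENNReal.ofReal t * ∫⁻ u in Set.Ioc 0 b, h (t * u) := by
  have key := lintegral_comp_smul' (volume : Measure ℝ) ((Set.Ioc 0 (t * b)).indicator h) ht
  rw [Module.finrank_self, pow_one] at key
  have hind : ∀ u : ℝ, (Set.Ioc 0 (t * b)).indicator h (t • u)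
      = (Set.Ioc 0 b).indicator (fun u => h (t * u)) u := by
    intro u
    have hmem : t * u ∈ Set.Ioc 0 (t * b) ↔ u ∈ Set.Ioc 0 b := by
      simp only [Set.mem_Ioc]
      constructor
      · rintro ⟨h1, h2⟩
        refine ⟨?_, le_of_mul_le_mul_left h2 ht⟩
        nlinarith
      · rintro ⟨h1, h2⟩
        exact ⟨mul_pos ht h1, mul_le_mul_of_nonneg_left h2 ht.le⟩
    by_cases hu : u ∈ Set.Ioc 0 b
    · rw [smul_eq_mul, Set.indicator_of_mem hu, Set.indicator_of_mem (hmem.2 hu)]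
    · rw [smul_eq_mul, Set.indicator_of_notMem hu,
        Set.indicator_of_notMem (fun h => hu (hmem.1 h))]
  simp only [hind] at key
  rw [← lintegral_indicator measurableSet_Ioc, ← lintegral_indicator measurableSet_Ioc, key,
    ← mul_assoc, ← ENNReal.ofReal_mul ht.le, mul_inv_cancel₀ ht.ne', ENNReal.ofReal_one, one_mul]

lemma fhk_scale {d : ℕ} {α : ℝ} (hα : α ≠ 0) {t : ℝ} (ht : 0 < t)
    (x : EuclideanSpace ℝ (Fin d)) :
    fhk d α t x = t ^ (-(d : ℝ) / α) * fhk d α 1 ((t ^ (-1 / α)) • x) := by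
  set c : ℝ := t ^ (-1 / α) with hc
  have hcpos : 0 < c := Real.rpow_pos_of_pos ht _
  have hcα : c ^ α = t⁻¹ := by
    rw [hc, ← Real.rpow_mul ht.le]
    rw [show (-1 / α) * α = -1 by field_simp, Real.rpow_neg_one]
  have hcd : c ^ d = t ^ (-(d : ℝ) / α) := by
    rw [hc, ← Real.rpow_natCast (t ^ (-1/α)) d, ← Real.rpow_mul ht.le]
    congr 1
    field_simp
  have key : ∀ η : EuclideanSpace ℝ (Fin d),
      Complex.exp (-(t : ℂ) * ((‖c • η‖ ^ α : ℝ) : ℂ)) *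
        Complex.exp (-Complex.I * ((inner ℝ x (c • η) : ℝ) : ℂ))
      = Complex.exp (-((1:ℝ) : ℂ) * ((‖η‖ ^ α : ℝ) : ℂ)) *
        Complex.exp (-Complex.I * ((inner ℝ (c • x) η : ℝ) : ℂ)) := by
    intro η
    have h1 : ‖c • η‖ ^ α = c ^ α * ‖η‖ ^ α := by
      rw [norm_smul, Real.norm_eq_abs, abs_of_pos hcpos, Real.mul_rpow hcpos.le (norm_nonneg _)]
    have h2 : (inner ℝ x (c • η) : ℝ) = (inner ℝ (c • x) η : ℝ) := by
      rw [real_inner_smul_right, real_inner_smul_left]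
    rw [h1, h2, hcα]
    congr 2
    push_cast
    have htC : (t : ℂ) ≠ 0 := by exact_mod_cast ht.ne'
    field_simp
  have hsub := MeasureTheory.Measure.integral_comp_smul (volume : Measure (EuclideanSpace ℝ (Fin d)))
    (fun ξ => Complex.exp (-(t : ℂ) * ((‖ξ‖ ^ α : ℝ) : ℂ)) *
        Complex.exp (-Complex.I * ((inner ℝ x ξ : ℝ) : ℂ))) c
  simp only [key, finrank_euclideanSpace_fin,
    abs_of_nonneg (inv_nonneg.2 (pow_nonneg hcpos.le d))] at hsub
  -- hsub : ∫ g = (c^d)⁻¹ • ∫ f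
  unfold fhk
  rw [hsub]
  rw [Complex.real_smul, Complex.re_ofReal_mul]
  push_cast
  rw [← hcd]
  field_simp

lemma pK_scale {d : ℕ} {α : ℝ} (hα : α ≠ 0) {t s : ℝ} (ht : 0 < t) (hs : 0 < s)
    (x y : EuclideanSpace ℝ (Fin d)) :
    pK d α (t * s) x y
      = t ^ (-(d : ℝ) / α) * pK d α s ((t ^ (-1 / α)) • x) ((t ^ (-1 / α)) • y) := by
  unfold pK
  rw [fhk_scale hα (mul_pos ht hs), fhk_scale hα hs]
  rw [show (t ^ (-1/α)) • y - (t ^ (-1/α)) • x = (t ^ (-1/α)) • (y - x) from (smul_sub _ _ _).symm]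
  rw [smul_smul, mul_comm (s ^ (-1/α)), ← Real.mul_rpow ht.le hs.le,
    Real.mul_rpow ht.le hs.le (z := -(d:ℝ)/α)]
  ring

lemma pn_scale {d : ℕ} {α κ : ℝ} (hα : 0 < α) :
    ∀ n : ℕ, ∀ t s : ℝ, 0 < t → 0 < s → ∀ x y : EuclideanSpace ℝ (Fin d),
      pn d α κ n (t * s) x y
        = ENNReal.ofReal (t ^ (-(d : ℝ) / α)) *
            pn d α κ n s ((t ^ (-1 / α)) • x) ((t ^ (-1 / α)) • y) := by
  intro n
  induction n with
  | zero =>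
      intro t s ht hs x y
      simp only [pn]
      rw [pK_scale hα.ne' ht hs, ENNReal.ofReal_mul (Real.rpow_nonneg ht.le _)]
  | succ n ih =>
      intro t s ht hs x y
      set c : ℝ := t ^ (-1 / α) with hc
      set R : ℝ := t ^ ((1 : ℝ) / α) with hR
      have hcpos : 0 < c := Real.rpow_pos_of_pos ht _
      have hRpos : 0 < R := Real.rpow_pos_of_pos ht _
      have hcR : c * R = 1 := by
        rw [hc, hR, ← Real.rpow_add ht, show (-1 / α + 1 / α : ℝ) = 0 by ring,
          Real.rpow_zero]
      have hRα : R ^ (-α) = t⁻¹ := by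
        rw [hR, ← Real.rpow_mul ht.le, show 1 / α * (-α) = -1 by field_simp,
          Real.rpow_neg_one]
      have hRd : R ^ (d : ℕ) = t ^ ((d : ℝ) / α) := by
        rw [hR, ← Real.rpow_natCast (t ^ ((1 : ℝ) / α)) d, ← Real.rpow_mul ht.le]
        congr 1; field_simp
      have hconst : ENNReal.ofReal (t ^ ((d : ℝ) / α)) * ENNReal.ofReal (t ^ (-(d : ℝ) / α)) = 1 := by
        rw [← ENNReal.ofReal_mul (Real.rpow_nonneg ht.le _), ← Real.rpow_add ht,
          show ((d : ℝ) / α + -(d : ℝ) / α : ℝ) = 0 by ring, Real.rpow_zero,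
          ENNReal.ofReal_one]
      have httinv : ENNReal.ofReal t * ENNReal.ofReal t⁻¹ = 1 := by
        rw [← ENNReal.ofReal_mul ht.le, mul_inv_cancel₀ ht.ne', ENNReal.ofReal_one]
      simp only [pn]
      rw [lintegral_Ioc_scale ht]
      have hae : (fun u : ℝ => ∫⁻ z, ENNReal.ofReal (pK d α (t * u) x z) *
              ENNReal.ofReal (κ * ‖z‖ ^ (-α)) * pn d α κ n (t * s - t * u) z y)
          =ᵐ[volume.restrict (Set.Ioc (0 : ℝ) s)]
          (fun u : ℝ => (ENNReal.ofReal (t ^ (-(d : ℝ) / α)) * ENNReal.ofReal t⁻¹) *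
            ∫⁻ w, ENNReal.ofReal (pK d α u (c • x) w) * ENNReal.ofReal (κ * ‖w‖ ^ (-α)) *
              pn d α κ n (s - u) w (c • y)) := by
        have hne : ∀ᵐ u : ℝ ∂volume, u ≠ s := by
          have h0 := measure_eq_zero_iff_ae_notMem.mp (Real.volume_singleton (a := s))
          filter_upwards [h0] with u hu
          simpa using hu
        filter_upwards [ae_restrict_mem measurableSet_Ioc, ae_restrict_of_ae hne]
          with u hu hune
        have hu1 : 0 < u := hu.1
        have hu2 : u < s := lt_of_le_of_ne hu.2 hune
        have hsu : 0 < s - u := sub_pos.2 hu2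
        have hint : ∀ w : EuclideanSpace ℝ (Fin d),
            ENNReal.ofReal (pK d α (t * u) x (R • w)) *
              ENNReal.ofReal (κ * ‖R • w‖ ^ (-α)) * pn d α κ n (t * s - t * u) (R • w) y
            = (ENNReal.ofReal (t ^ (-(d : ℝ) / α)) * ENNReal.ofReal t⁻¹ *
                ENNReal.ofReal (t ^ (-(d : ℝ) / α))) *
              (ENNReal.ofReal (pK d α u (c • x) w) * ENNReal.ofReal (κ * ‖w‖ ^ (-α)) *
                pn d α κ n (s - u) w (c • y)) := by
          intro w
          have e1 : pK d α (t * u) x (R • w) = t ^ (-(d : ℝ) / α) * pK d α u (c • x) w := by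
            rw [pK_scale hα.ne' ht hu1, smul_smul, hcR, one_smul]
          have e2 : κ * ‖R • w‖ ^ (-α) = t⁻¹ * (κ * ‖w‖ ^ (-α)) := by
            rw [norm_smul, Real.norm_eq_abs, abs_of_pos hRpos,
              Real.mul_rpow hRpos.le (norm_nonneg _), hRα]
            ring_nf
          have e3 : pn d α κ n (t * s - t * u) (R • w) y
              = ENNReal.ofReal (t ^ (-(d : ℝ) / α)) * pn d α κ n (s - u) w (c • y) := by
            rw [show t * s - t * u = t * (s - u) by ring, ih t (s - u) ht hsu,
              smul_smul, hcR, one_smul]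
          rw [e1, e2, e3, ENNReal.ofReal_mul (Real.rpow_nonneg ht.le _),
            ENNReal.ofReal_mul (inv_nonneg.2 ht.le)]
          ring
        rw [lintegral_eq_comp_smul (f := fun z => ENNReal.ofReal (pK d α (t * u) x z) *
              ENNReal.ofReal (κ * ‖z‖ ^ (-α)) * pn d α κ n (t * s - t * u) z y) hRpos]
        simp only [hint]
        rw [lintegral_const_mul' _ _ (by
          exact ENNReal.mul_ne_top (ENNReal.mul_ne_top ENNReal.ofReal_ne_top
            ENNReal.ofReal_ne_top) ENNReal.ofReal_ne_top), hRd, ← mul_assoc]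
        congr 1
        calc ENNReal.ofReal (t ^ ((d:ℝ)/α)) * (ENNReal.ofReal (t ^ (-(d:ℝ)/α)) *
              ENNReal.ofReal t⁻¹ * ENNReal.ofReal (t ^ (-(d:ℝ)/α)))
            = (ENNReal.ofReal (t ^ ((d:ℝ)/α)) * ENNReal.ofReal (t ^ (-(d:ℝ)/α))) *
              (ENNReal.ofReal (t ^ (-(d:ℝ)/α)) * ENNReal.ofReal t⁻¹) := by ring
          _ = ENNReal.ofReal (t ^ (-(d:ℝ)/α)) * ENNReal.ofReal t⁻¹ := by
              rw [hconst, one_mul]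
      rw [lintegral_congr_ae hae, lintegral_const_mul' _ _ (ENNReal.mul_ne_top
        ENNReal.ofReal_ne_top ENNReal.ofReal_ne_top), ← mul_assoc]
      congr 1
      calc ENNReal.ofReal t * (ENNReal.ofReal (t ^ (-(d:ℝ)/α)) * ENNReal.ofReal t⁻¹)
          = (ENNReal.ofReal t * ENNReal.ofReal t⁻¹) * ENNReal.ofReal (t ^ (-(d:ℝ)/α)) := by ring
        _ = ENNReal.ofReal (t ^ (-(d:ℝ)/α)) := by rw [httinv, one_mul]

theorem stmt_1 (d : ℕ) (α κ δ : ℝ) (hα0 : 0 < α) (hα2 : α < 2) (hαd : α < d)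
    (hδ0 : 0 ≤ δ) (hδ : δ ≤ ((d : ℝ) - α) / 2) (hκδ : κ = kappaC d α δ) :
    ∀ t : ℝ, 0 < t → ∀ x y : EuclideanSpace ℝ (Fin d),
      tp d α κ t x y =
        ENNReal.ofReal (t ^ (-(d : ℝ) / α)) *
          tp d α κ 1 ((t ^ (-1 / α)) • x) ((t ^ (-1 / α)) • y) := by
  intro t ht x y
  unfold tp
  calc ∑' n, pn d α κ n t x y
      = ∑' n, pn d α κ n (t * 1) x y := by rw [mul_one]
    _ = ∑' n, ENNReal.ofReal (t ^ (-(d : ℝ) / α)) *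
          pn d α κ n 1 ((t ^ (-1 / α)) • x) ((t ^ (-1 / α)) • y) :=
        tsum_congr fun n => pn_scale hα0 n t 1 ht one_pos x y
    _ = _ := ENNReal.tsum_mul_left
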